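/- Let Ω ⊂ ℝⁿ be a convex domain containing no real line, and let w, z ∈ Ω ⊂ T_Ω ∩ ℝⁿ be distinct. If g : 𝔻 → T_Ω is a complex geodesic with g(0) = w and g(s) = z for some s ∈ (0,1), then the map f(λ) := (g(λ) + conj(g(conj λ)))/2 is a complex geodesic of T_Ω with f(0) = w, f(s) = z, and f((−1,1)) ⊂ ℝⁿ. -/

import Mathlib

open Set Metric Complex

def Tube {n : ℕ} (Ω : Set (Fin n → ℝ)) : Set (Fin n → ℂ) :=
  {z | (fun i => (z i).re) ∈ Ω}

def IsComplexGeodesic {n : ℕ} (D : Set (Fin n → ℂ)) (f : ℂ → Fin n → ℂ) : Prop :=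
  DifferentiableOn ℂ f (ball 0 1) ∧ MapsTo f (ball 0 1) D ∧
    ∃ F : (Fin n → ℂ) → ℂ, DifferentiableOn ℂ F D ∧ MapsTo F D (ball 0 1) ∧
      ∀ l ∈ ball (0:ℂ) 1, F (f l) = l

/-!
Both the tube `T_Ω` and the disc are convex and invariant under conjugation, so averaging a
holomorphic map `h` with its reflection `conj ∘ h ∘ conj` keeps it holomorphic between them. Apply
this to `g` (giving `f`) and to its left inverse `F` (giving `H`). Since `g(0)` and `g(s)` are
real, `f` and `H` agree with `g` and `F` at these points, so `H ∘ f` is a holomorphic self-map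
of the disc fixing `0` and `s ≠ 0`; by the Schwarz lemma it is the identity.
-/

section Tube

variable {n : ℕ} {Ω : Set (Fin n → ℝ)}

theorem star_mem_tube_iff {v : Fin n → ℂ} : star v ∈ Tube Ω ↔ v ∈ Tube Ω := by
  simp [Tube]

theorem isOpen_tube (hΩ : IsOpen Ω) : IsOpen (Tube Ω) :=
  hΩ.preimage (continuous_pi fun i => continuous_re.comp (continuous_apply i))

theorem convex_tube (hΩ : Convex ℝ Ω) : Convex ℝ (Tube Ω) :=
  hΩ.linear_preimage ((LinearMap.pi fun i => reLm.comp (LinearMap.proj i)).restrictScalars ℝ)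

end Tube

section StarSymm

variable {E F : Type*} [Star E] [AddCommGroup F] [Module ℂ F] [Star F]

noncomputable def starSymm (h : E → F) (x : E) : F := (2 : ℂ)⁻¹ • (h x + star (h (star x)))

theorem starSymm_eq_of_star_eq {h : E → F} {x : E} (hx : star x = x) (hhx : star (h x) = h x) :
    starSymm h x = h x := by
  rw [starSymm, hx, hhx, ← two_smul ℂ, smul_smul, inv_mul_cancel₀ two_ne_zero, one_smul]

theorem Set.MapsTo.starSymm {h : E → F} {U : Set E} {V : Set F} (hV : Convex ℝ V)
    (hUstar : ∀ x ∈ U, star x ∈ U) (hVstar : ∀ y ∈ V, star y ∈ V) (hh : MapsTo h U V) :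
    MapsTo (starSymm h) U V := by
  intro x hx
  have hmid : _root_.starSymm h x = (2⁻¹ : ℝ) • h x + (2⁻¹ : ℝ) • star (h (star x)) := by
    simp only [_root_.starSymm, smul_add, ← Complex.coe_smul]; norm_num
  rw [hmid]
  exact hV (hh hx) (hVstar _ (hh (hUstar x hx))) (by norm_num) (by norm_num) (by norm_num)

end StarSymm

theorem DifferentiableOn.starSymm {E F : Type*} [NormedAddCommGroup E] [NormedSpace ℂ E]
    [StarAddMonoid E] [StarModule ℂ E] [ContinuousStar E] [NormedAddCommGroup F]
    [NormedSpace ℂ F] [StarAddMonoid F] [StarModule ℂ F] [ContinuousStar F]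
    {h : E → F} {U : Set E} (hU : IsOpen U) (hUstar : ∀ x ∈ U, star x ∈ U)
    (hh : DifferentiableOn ℂ h U) : DifferentiableOn ℂ (starSymm h) U := by
  intro x hx
  have hstar : DifferentiableAt ℂ (star ∘ h ∘ star) x := by
    simpa using (hh.differentiableAt (hU.mem_nhds (hUstar x hx))).star_star
  exact (((hh.differentiableAt (hU.mem_nhds hx)).add hstar).const_smul _).differentiableWithinAt

theorem Complex.eqOn_id_of_mapsTo_ball_of_fixed {φ : ℂ → ℂ} {s : ℂ}
    (hd : DifferentiableOn ℂ φ (ball 0 1)) (hmaps : MapsTo φ (ball 0 1) (ball 0 1))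
    (h0 : φ 0 = 0) (hs : s ∈ ball (0 : ℂ) 1) (hs0 : s ≠ 0) (hφs : φ s = s) :
    EqOn φ id (ball 0 1) := by
  have hslope : dslope φ 0 s = 1 := by
    rw [dslope_of_ne _ hs0, slope_def_field, hφs, h0, sub_zero, div_self hs0]
  have hmaps' : MapsTo φ (ball 0 1) (closedBall (φ 0) 1) := by
    rw [h0]; exact hmaps.mono_right ball_subset_closedBall
  intro z hz
  simpa [h0, hslope] using
    affine_of_mapsTo_ball_of_norm_dslope_eq_div hd hmaps' hs (by simp [hslope]) hz

theorem IsComplexGeodesic.starSymm {n : ℕ} {Ω : Set (Fin n → ℝ)} (hΩopen : IsOpen Ω)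
    (hΩconv : Convex ℝ Ω) {g : ℂ → Fin n → ℂ} (hg : IsComplexGeodesic (Tube Ω) g) {s : ℂ}
    (hs : s ∈ ball (0 : ℂ) 1) (hs0 : s ≠ 0) (hs_real : star s = s)
    (hg0 : star (g 0) = g 0) (hgs : star (g s) = g s) :
    IsComplexGeodesic (Tube Ω) (starSymm g) := by
  obtain ⟨hgd, hgm, F, hFd, hFm, hFg⟩ := hg
  have hball_star : ∀ l ∈ ball (0 : ℂ) 1, star l ∈ ball (0 : ℂ) 1 := by simp
  have htube_star : ∀ v ∈ Tube Ω, star v ∈ Tube Ω := fun v hv => star_mem_tube_iff.2 hv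
  have hfd := hgd.starSymm isOpen_ball hball_star
  have hfm : MapsTo (_root_.starSymm g) (ball 0 1) (Tube Ω) :=
    hgm.starSymm (convex_tube hΩconv) hball_star htube_star
  have hHd := hFd.starSymm (isOpen_tube hΩopen) htube_star
  have hHm : MapsTo (_root_.starSymm F) (Tube Ω) (ball 0 1) :=
    hFm.starSymm (convex_ball 0 1) htube_star hball_star
  have hfix : ∀ l ∈ ball (0 : ℂ) 1, star l = l → star (g l) = g l →
      _root_.starSymm F (_root_.starSymm g l) = l := by
    intro l hl hl_real hgl
    rw [starSymm_eq_of_star_eq hl_real hgl, starSymm_eq_of_star_eq hgl (by rw [hFg l hl, hl_real]),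
      hFg l hl]
  exact ⟨hfd, hfm, _root_.starSymm F, hHd, hHm,
    Complex.eqOn_id_of_mapsTo_ball_of_fixed (hHd.comp hfd hfm) (hHm.comp hfm)
      (hfix 0 (mem_ball_self one_pos) (star_zero ℂ) hg0) hs hs0 (hfix s hs hs_real hgs)⟩

theorem stmt_9 {n : ℕ} (Ω : Set (Fin n → ℝ)) (hΩopen : IsOpen Ω)
    (hΩconv : Convex ℝ Ω)
    (w z : Fin n → ℝ)
    (g : ℂ → Fin n → ℂ) (hg : IsComplexGeodesic (Tube Ω) g)
    (s : ℝ) (hs : s ∈ Set.Ioo (0:ℝ) 1)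
    (hg0 : g 0 = fun i => (w i : ℂ)) (hgs : g (s : ℂ) = fun i => (z i : ℂ)) :
    IsComplexGeodesic (Tube Ω)
        (fun l => fun i => (g l i + (starRingEnd ℂ) (g ((starRingEnd ℂ) l) i)) / 2) ∧
      ((fun i => (g (0:ℂ) i + (starRingEnd ℂ) (g ((starRingEnd ℂ) (0:ℂ)) i)) / 2)
          = fun i => (w i : ℂ)) ∧
      ((fun i => (g (s:ℂ) i + (starRingEnd ℂ) (g ((starRingEnd ℂ) (s:ℂ)) i)) / 2)
          = fun i => (z i : ℂ)) ∧
      (∀ t ∈ Set.Ioo (-1:ℝ) 1, ∀ i,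
        ((g (t:ℂ) i + (starRingEnd ℂ) (g ((starRingEnd ℂ) (t:ℂ)) i)) / 2).im = 0) := by
  have hf : (fun l => fun i => (g l i + (starRingEnd ℂ) (g ((starRingEnd ℂ) l) i)) / 2)
      = starSymm g := by
    funext l i
    simp only [starSymm, RCLike.star_def, Pi.smul_apply, Pi.add_apply, Pi.star_apply, smul_eq_mul]
    ring
  have hs_ball : (s : ℂ) ∈ ball (0 : ℂ) 1 := by
    simp [abs_of_pos hs.1, hs.2]
  refine ⟨hf ▸ hg.starSymm hΩopen hΩconv hs_ball (by exact_mod_cast hs.1.ne') (conj_ofReal s)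
    (by ext i; simp [hg0]) (by ext i; simp [hgs]), ?_, ?_, ?_⟩
  · simp [hg0]
  · simp [hgs]
  · intro t _ i
    rw [conj_ofReal, add_conj]
    simp
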